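/- Let g ≥ 2 and let τ ∈ ℍ_g be written in block form τ = [[t, zᵀ],[z, Z]] with t ∈ ℂ, z ∈ ℂ^{g−1} and Z a symmetric (g−1)×(g−1) matrix (then Z ∈ ℍ_{g−1}). Then for all x ∈ ℂ, b ∈ ℂ^{g−1}, δ₁ ∈ {0,1} and ε, δ ∈ {0,1}^{g−1}: θ[(1,ε);(δ₁,δ)](τ, (x,b)) = Σ_{N ∈ ℤ} exp(πi (N+1/2)² t + 2πi (N+1/2) x) · i^{(2N+1)δ₁} · θ[ε;δ](Z, b + (N+1/2) z), the series on the right being absolutely convergent. -/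

import Mathlib

open Complex Matrix

/-- The genus-`g` theta function with characteristic `[ε; δ]`. -/
noncomputable def theta (g : ℕ) (ε δ : Fin g → ℤ) (τ : Matrix (Fin g) (Fin g) ℂ)
    (z : Fin g → ℂ) : ℂ :=
  ∑' N : Fin g → ℤ,
    Complex.exp (↑Real.pi * I *
        (∑ j, ∑ k, ((N j : ℂ) + (ε j : ℂ) / 2) * τ j k * ((N k : ℂ) + (ε k : ℂ) / 2)) +
      2 * ↑Real.pi * I *
        (∑ j, ((N j : ℂ) + (ε j : ℂ) / 2) * (z j + (δ j : ℂ) / 2)))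

/-- Membership in the Siegel upper half-space. -/
def SiegelUpper (g : ℕ) (τ : Matrix (Fin g) (Fin g) ℂ) : Prop :=
  τ.IsSymm ∧ (Matrix.of fun j k => (τ j k).im : Matrix (Fin g) (Fin g) ℝ).PosDef

/-!
Write `N ∈ ℤⁿ⁺¹` as `(m, N')`. Because `τ` is symmetric, the exponent of the `N`-th term of the
genus-`(n+1)` series splits into the genus-one exponent in `m + 1/2` plus the genus-`n` exponent at
the shifted argument `b + (m + 1/2) z`, and the characteristic `δ₁` contributes
`exp (π i (m + 1/2) δ₁) = i ^ ((2m+1) δ₁)`. Summing over `N'` first is justified by absolute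
convergence of the whole series: `Im τ ≥ c · 1` for some `c > 0` bounds each term by a product of
one-variable Gaussians.
-/

open Finset

lemma Matrix.PosDef.exists_mul_sum_sq_le {ι : Type*} [Fintype ι] {Y : Matrix ι ι ℝ}
    (hY : Y.PosDef) : ∃ c > 0, ∀ v : ι → ℝ, c * ∑ i, v i ^ 2 ≤ v ⬝ᵥ Y *ᵥ v := by
  rcases isEmpty_or_nonempty ι with _ | ⟨⟨i₀⟩⟩
  · exact ⟨1, one_pos, fun v => by simp⟩
  classical
  let S : Set (ι → ℝ) := {u | ∑ i, u i ^ 2 = 1}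
  have hS : IsCompact S := by
    refine Metric.isCompact_of_isClosed_isBounded (isClosed_eq (by fun_prop) continuous_const)
      ((Metric.isBounded_closedBall (x := 0) (r := 1)).subset fun u hu => ?_)
    refine mem_closedBall_zero_iff.2 ((pi_norm_le_iff_of_nonneg zero_le_one).2 fun i => ?_)
    have : u i ^ 2 ≤ 1 := hu ▸ single_le_sum (fun j _ => sq_nonneg (u j)) (mem_univ i)
    exact (Real.norm_eq_abs _).trans_le ((sq_le_one_iff_abs_le_one _).1 this)
  have hS₀ : Pi.single (M := fun _ => ℝ) i₀ 1 ∈ S := by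
    show ∑ i, _ = _
    simp [Pi.single_apply]
  obtain ⟨u₀, hu₀, hmin⟩ :=
    hS.exists_isMinOn ⟨_, hS₀⟩ (f := fun u => u ⬝ᵥ Y *ᵥ u) (by fun_prop)
  refine ⟨u₀ ⬝ᵥ Y *ᵥ u₀, hY.dotProduct_mulVec_pos (by rintro rfl; simp [S] at hu₀),
    fun v => ?_⟩
  rcases eq_or_ne v 0 with rfl | hv
  · simp
  set s := ∑ i, v i ^ 2
  have hs : 0 < s := by
    obtain ⟨i, hi⟩ := Function.ne_iff.1 hv
    exact (sq_pos_of_ne_zero hi).trans_le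
      (single_le_sum (fun j _ => sq_nonneg (v j)) (mem_univ i))
  have hu : (√s)⁻¹ • v ∈ S := by
    show ∑ i, _ = _
    simp only [Pi.smul_apply, smul_eq_mul, mul_pow, ← mul_sum, inv_pow, Real.sq_sqrt hs.le]
    exact inv_mul_cancel₀ hs.ne'
  have key : u₀ ⬝ᵥ Y *ᵥ u₀ ≤ _ := hmin hu
  simp only [smul_dotProduct, mulVec_smul, dotProduct_smul, smul_eq_mul] at key
  rw [← mul_assoc, ← mul_inv, Real.mul_self_sqrt hs.le, le_inv_mul_iff₀ hs] at key
  linarith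

lemma summable_fintype_prod_of_nonneg {ι κ : Type*} [Fintype ι] {f : ι → κ → ℝ}
    (hf₀ : ∀ i k, 0 ≤ f i k) (hf : ∀ i, Summable (f i)) :
    Summable fun x : ι → κ => ∏ i, f i (x i) := by
  classical
  refine summable_of_sum_le (c := ∏ i, ∑' k, f i k)
    (fun x => prod_nonneg fun i _ => hf₀ i (x i)) fun s => ?_
  calc ∑ x ∈ s, ∏ i, f i (x i)
      ≤ ∑ x ∈ Fintype.piFinset fun i => s.image (· i), ∏ i, f i (x i) :=
        sum_le_sum_of_subset_of_nonneg
          (fun x hx => Fintype.mem_piFinset.2 fun i => mem_image_of_mem _ hx)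
          (fun x _ _ => prod_nonneg fun i _ => hf₀ i (x i))
    _ = ∏ i, ∑ k ∈ s.image (· i), f i k := (prod_univ_sum _ _).symm
    _ ≤ ∏ i, ∑' k, f i k :=
        prod_le_prod (fun i _ => sum_nonneg fun k _ => hf₀ i k)
          fun i _ => (hf i).sum_le_tsum _ fun k _ => hf₀ i k

lemma summable_exp_neg_mul_add_sq {A : ℝ} (hA : 0 < A) (B a : ℝ) :
    Summable fun m : ℤ => Real.exp (-A * (m + a) ^ 2 + B * (m + a)) := by
  have hπ := Real.pi_pos
  -- chosen so that `‖jacobiTheta₂_term m z τ‖ = exp (-A m² + (B - 2 A a) m)`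
  set τ : ℂ := (A / Real.pi : ℝ) * I
  set z : ℂ := ((2 * A * a - B) / (2 * Real.pi) : ℝ) * I
  have hτ : 0 < τ.im := by simp [τ]; positivity
  refine (((summable_jacobiTheta₂_term_iff z τ).2 hτ).norm.mul_left
    (Real.exp (-A * a ^ 2 + B * a))).congr fun m => ?_
  rw [norm_jacobiTheta₂_term, ← Real.exp_add]
  congr 1
  simp only [τ, z, Complex.mul_I_im, Complex.ofReal_re]
  field_simp
  ring

noncomputable def thetaTerm (g : ℕ) (ε δ : Fin g → ℤ) (τ : Matrix (Fin g) (Fin g) ℂ)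
    (z : Fin g → ℂ) (N : Fin g → ℤ) : ℂ :=
  Complex.exp (↑Real.pi * I *
        (∑ j, ∑ k, ((N j : ℂ) + (ε j : ℂ) / 2) * τ j k * ((N k : ℂ) + (ε k : ℂ) / 2)) +
      2 * ↑Real.pi * I *
        (∑ j, ((N j : ℂ) + (ε j : ℂ) / 2) * (z j + (δ j : ℂ) / 2)))

lemma theta_eq_tsum_thetaTerm (g : ℕ) (ε δ : Fin g → ℤ) (τ : Matrix (Fin g) (Fin g) ℂ)
    (z : Fin g → ℂ) : theta g ε δ τ z = ∑' N, thetaTerm g ε δ τ z N := rfl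

lemma norm_thetaTerm (g : ℕ) (ε δ : Fin g → ℤ) (τ : Matrix (Fin g) (Fin g) ℂ)
    (z : Fin g → ℂ) (N : Fin g → ℤ) :
    ‖thetaTerm g ε δ τ z N‖ =
      Real.exp (-Real.pi * ((fun j => N j + ε j / 2 : Fin g → ℝ) ⬝ᵥ
          (of fun j k => (τ j k).im) *ᵥ fun j => N j + ε j / 2) -
        2 * Real.pi * ∑ j, (N j + ε j / 2) * (z j).im) := by
  have hv : ∀ j, (N j : ℂ) + (ε j : ℂ) / 2 = ((N j + ε j / 2 : ℝ) : ℂ) := fun j => by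
    push_cast; rfl
  simp only [thetaTerm, Complex.norm_exp, hv]
  simp [Complex.mul_re, Complex.mul_im, dotProduct, mulVec, mul_sum, mul_assoc, sub_eq_add_neg]

lemma summable_thetaTerm {g : ℕ} {τ : Matrix (Fin g) (Fin g) ℂ}
    (hτ : (of fun j k => (τ j k).im : Matrix (Fin g) (Fin g) ℝ).PosDef)
    (ε δ : Fin g → ℤ) (z : Fin g → ℂ) : Summable (thetaTerm g ε δ τ z) := by
  obtain ⟨c, hc, hquad⟩ := hτ.exists_mul_sum_sq_le
  have hπ := Real.pi_pos
  set gaussian : Fin g → ℤ → ℝ := fun j m =>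
    Real.exp (-(Real.pi * c) * (m + ε j / 2) ^ 2 + -2 * Real.pi * (z j).im * (m + ε j / 2))
  have hbound : Summable fun N : Fin g → ℤ => ∏ j, gaussian j (N j) :=
    summable_fintype_prod_of_nonneg (fun _ _ => (Real.exp_pos _).le)
      fun j => summable_exp_neg_mul_add_sq (by positivity) _ _
  refine hbound.of_norm_bounded fun N => ?_
  rw [norm_thetaTerm, ← Real.exp_sum, Real.exp_le_exp, sum_add_distrib, ← mul_sum]
  have hquadN := mul_le_mul_of_nonneg_left (hquad fun j => N j + ε j / 2) hπ.le
  have hlin : ∑ j, -2 * Real.pi * (z j).im * (N j + ε j / 2) =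
      -∑ j, 2 * Real.pi * ((N j + ε j / 2) * (z j).im) := by
    rw [← sum_neg_distrib]
    exact sum_congr rfl fun j _ => by ring
  rw [hlin, ← mul_sum]
  linarith

lemma I_zpow_eq_exp (k : ℤ) : I ^ k = Complex.exp (↑Real.pi * I * k / 2) := by
  rw [show ↑Real.pi * I * k / 2 = k * (↑Real.pi / 2 * I) by ring, exp_int_mul,
    exp_pi_div_two_mul_I]

lemma thetaTerm_cons {n : ℕ} {τ : Matrix (Fin (n + 1)) (Fin (n + 1)) ℂ} (hτ : τ.IsSymm)
    (ε₁ δ₁ : ℤ) (ε δ : Fin n → ℤ) (x : ℂ) (b : Fin n → ℂ) (m : ℤ) (N : Fin n → ℤ) :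
    thetaTerm (n + 1) (Fin.cons ε₁ ε) (Fin.cons δ₁ δ) τ (Fin.cons x b) (Fin.cons m N) =
      Complex.exp (↑Real.pi * I * ((m : ℂ) + ε₁ / 2) ^ 2 * τ 0 0 +
          2 * ↑Real.pi * I * ((m : ℂ) + ε₁ / 2) * x) *
        I ^ ((2 * m + ε₁) * δ₁) *
        thetaTerm n ε δ (of fun j k => τ j.succ k.succ)
          (fun j => b j + ((m : ℂ) + ε₁ / 2) * τ j.succ 0) N := by
  simp only [thetaTerm, I_zpow_eq_exp, ← Complex.exp_add]
  congr 1
  simp only [Fin.sum_univ_succ, Fin.cons_zero, Fin.cons_succ, of_apply,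
    ← hτ.apply 0 (Fin.succ _)]
  set μ : ℂ := (m : ℂ) + ε₁ / 2
  set a : Fin n → ℂ := fun j => (N j : ℂ) + ε j / 2
  set s := ∑ j, a j * τ j.succ 0
  have h1 : ∑ k, μ * τ k.succ 0 * a k = μ * s := by
    rw [mul_sum]; exact sum_congr rfl fun _ _ => by ring
  have h2 : ∑ j, (a j * τ j.succ 0 * μ + ∑ k, a j * τ j.succ k.succ * a k) =
      μ * s + ∑ j, ∑ k, a j * τ j.succ k.succ * a k := by
    rw [sum_add_distrib, mul_sum]; congr 1; exact sum_congr rfl fun _ _ => by ring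
  have h3 : ∑ j, a j * (b j + μ * τ j.succ 0 + δ j / 2) =
      ∑ j, a j * (b j + δ j / 2) + μ * s := by
    rw [mul_sum, ← sum_add_distrib]; exact sum_congr rfl fun _ _ => by ring
  rw [h1, h2, h3]
  push_cast
  ring

theorem stmt_3_general (n : ℕ) (τ : Matrix (Fin (n + 1)) (Fin (n + 1)) ℂ)
    (hτ : SiegelUpper (n + 1) τ)
    (x : ℂ) (b : Fin n → ℂ) (δ₁ : ℤ)
    (ε δ : Fin n → ℤ) :
    Summable (fun N : ℤ =>
      Complex.exp (↑Real.pi * I * ((N : ℂ) + 1/2)^2 * τ 0 0 +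
          2 * ↑Real.pi * I * ((N : ℂ) + 1/2) * x) *
        I ^ ((2 * N + 1) * δ₁) *
        theta n ε δ (Matrix.of fun j k => τ j.succ k.succ)
          (fun j => b j + ((N : ℂ) + 1/2) * τ j.succ 0)) ∧
    theta (n + 1) (Fin.cons 1 ε) (Fin.cons δ₁ δ) τ (Fin.cons x b) =
      ∑' N : ℤ,
        Complex.exp (↑Real.pi * I * ((N : ℂ) + 1/2)^2 * τ 0 0 +
            2 * ↑Real.pi * I * ((N : ℂ) + 1/2) * x) *
          I ^ ((2 * N + 1) * δ₁) *
          theta n ε δ (Matrix.of fun j k => τ j.succ k.succ)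
            (fun j => b j + ((N : ℂ) + 1/2) * τ j.succ 0) := by
  set coeff : ℤ → ℂ := fun m => Complex.exp (↑Real.pi * I * ((m : ℂ) + 1/2)^2 * τ 0 0 +
    2 * ↑Real.pi * I * ((m : ℂ) + 1/2) * x) * I ^ ((2 * m + 1) * δ₁)
  set τ' : Matrix (Fin n) (Fin n) ℂ := Matrix.of fun j k => τ j.succ k.succ
  set shift : ℤ → Fin n → ℂ := fun m j => b j + ((m : ℂ) + 1/2) * τ j.succ 0
  have hsplit (p : ℤ × (Fin n → ℤ)) :
      thetaTerm (n + 1) (Fin.cons 1 ε) (Fin.cons δ₁ δ) τ (Fin.cons x b) (Fin.consEquiv _ p) =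
        coeff p.1 * thetaTerm n ε δ τ' (shift p.1) p.2 := by
    have h := thetaTerm_cons hτ.1 1 δ₁ ε δ x b p.1 p.2
    rw [Int.cast_one] at h
    exact h
  have hprod :
      Summable fun p : ℤ × (Fin n → ℤ) => coeff p.1 * thetaTerm n ε δ τ' (shift p.1) p.2 :=
    ((Fin.consEquiv _).summable_iff.2 (summable_thetaTerm hτ.2 _ _ _)).congr hsplit
  have hfiber (m : ℤ) : ∑' N, coeff m * thetaTerm n ε δ τ' (shift m) N =
      coeff m * theta n ε δ τ' (shift m) := tsum_mul_left
  refine ⟨hprod.prod.congr hfiber, ?_⟩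
  rw [theta_eq_tsum_thetaTerm, ← (Fin.consEquiv _).tsum_eq, tsum_congr hsplit, hprod.tsum_prod]
  exact tsum_congr hfiber

/-- Fourier–Jacobi expansion of a theta function with first characteristic entry `ε₁ = 1`,
with respect to the block decomposition `τ = [[t, zᵀ],[z, Z]]`. -/
theorem stmt_3 (n : ℕ) (hn : 1 ≤ n) (τ : Matrix (Fin (n + 1)) (Fin (n + 1)) ℂ)
    (hτ : SiegelUpper (n + 1) τ)
    (x : ℂ) (b : Fin n → ℂ) (δ₁ : ℤ) (hδ₁ : δ₁ = 0 ∨ δ₁ = 1)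
    (ε δ : Fin n → ℤ) (hε : ∀ j, ε j = 0 ∨ ε j = 1) (hδ : ∀ j, δ j = 0 ∨ δ j = 1) :
    Summable (fun N : ℤ =>
      Complex.exp (↑Real.pi * I * ((N : ℂ) + 1/2)^2 * τ 0 0 +
          2 * ↑Real.pi * I * ((N : ℂ) + 1/2) * x) *
        I ^ ((2 * N + 1) * δ₁) *
        theta n ε δ (Matrix.of fun j k => τ j.succ k.succ)
          (fun j => b j + ((N : ℂ) + 1/2) * τ j.succ 0)) ∧
    theta (n + 1) (Fin.cons 1 ε) (Fin.cons δ₁ δ) τ (Fin.cons x b) =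
      ∑' N : ℤ,
        Complex.exp (↑Real.pi * I * ((N : ℂ) + 1/2)^2 * τ 0 0 +
            2 * ↑Real.pi * I * ((N : ℂ) + 1/2) * x) *
          I ^ ((2 * N + 1) * δ₁) *
          theta n ε δ (Matrix.of fun j k => τ j.succ k.succ)
            (fun j => b j + ((N : ℂ) + 1/2) * τ j.succ 0) :=
  stmt_3_general n τ hτ x b δ₁ ε δ
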